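/- arXiv:1208.1665 — 4 statements merged into one kernel-verified Lean document; each statement's English description precedes it below -/
import Mathlib

section
/- Let q₁, q₂ : ℝ → ℂ satisfy Re qᵢ ≥ 0 and the Hartman–Wintner condition for i = 1,2. Let (gₙ)_{n≥1} be any family of functions gₙ : ℝ → [0,1], and define qⁿ(x,ξ) := q₁(gₙ(x)·ξ) + q₂((1 − gₙ(x))·ξ). Then lim_{|ξ|→∞} inf_{n≥1} inf_{x∈ℝ} Re qⁿ(x,ξ)/log(1+|ξ|) = ∞. -/
open Filter Real

/- Since `max t (1 - t) ≥ 1/2`, one of the two arguments `t ξ`, `(1 - t) ξ` has modulus at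
least `|ξ| / 2`, uniformly in `t ∈ [0, 1]`. The corresponding symbol then dominates
`2M log (1 + |ξ|/2) ≥ M log (1 + |ξ|)` for large `|ξ|`, while the other one is nonnegative. -/

lemma log_one_add_le_two_mul_log_one_add_half {s : ℝ} (hs : 0 ≤ s) :
    log (1 + s) ≤ 2 * log (1 + s / 2) := by
  rw [← Nat.cast_two, ← log_pow]
  exact log_le_log (by linarith) (by nlinarith)

lemma abs_le_two_mul_abs_mul_or {t : ℝ} (ht : t ∈ Set.Icc (0 : ℝ) 1) (ξ : ℝ) :
    |ξ| ≤ 2 * |t * ξ| ∨ |ξ| ≤ 2 * |(1 - t) * ξ| := by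
  rw [abs_mul, abs_mul, abs_of_nonneg ht.1, abs_of_nonneg (sub_nonneg.2 ht.2)]
  rcases le_total (1 / 2) t with h | h
  · exact Or.inl (by nlinarith [abs_nonneg ξ])
  · exact Or.inr (by nlinarith [abs_nonneg ξ])

variable {f : ℝ → ℝ}

lemma exists_mul_log_le_of_tendsto_div_log
    (hf : Tendsto (fun η => f η / log (1 + |η|)) (cocompact ℝ) atTop) (M : ℝ) :
    ∃ R, ∀ η, R ≤ |η| → M * log (1 + |η|) ≤ f η := by
  have h := (hf.eventually_ge_atTop M).and (tendsto_norm_cocompact_atTop.eventually_gt_atTop 0)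
  rw [← Metric.cobounded_eq_cocompact, ← comap_norm_atTop, eventually_comap,
    eventually_atTop] at h
  obtain ⟨R, hR⟩ := h
  refine ⟨R, fun η hη => ?_⟩
  obtain ⟨hM, hη⟩ := hR |η| hη η rfl
  rw [norm_eq_abs] at hη
  exact (le_div_iff₀ (log_pos (by linarith))).1 hM

lemma eventually_forall_mul_log_le_of_tendsto_div_log
    (hf : Tendsto (fun η => f η / log (1 + |η|)) (cocompact ℝ) atTop) (M : ℝ) :
    ∀ᶠ ξ in cocompact ℝ, ∀ η, |ξ| ≤ 2 * |η| → M * log (1 + |ξ|) ≤ f η := by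
  obtain ⟨R, hR⟩ := exists_mul_log_le_of_tendsto_div_log hf (2 * max M 0)
  filter_upwards [tendsto_norm_cocompact_atTop.eventually_ge_atTop (2 * R)] with ξ hξ η hη
  rw [norm_eq_abs] at hξ
  have hlog : 0 ≤ log (1 + |ξ|) := log_nonneg (by linarith [abs_nonneg ξ])
  calc M * log (1 + |ξ|) ≤ max M 0 * log (1 + |ξ|) := by gcongr; exact le_max_left M 0
    _ ≤ max M 0 * (2 * log (1 + |ξ| / 2)) := by
      gcongr; exact log_one_add_le_two_mul_log_one_add_half (abs_nonneg ξ)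
    _ ≤ 2 * max M 0 * log (1 + |η|) := by
      rw [mul_left_comm, ← mul_assoc]
      gcongr
      linarith [abs_nonneg ξ]
    _ ≤ f η := hR η (by linarith)

/-- Let `q₁, q₂ : ℝ → ℂ` have nonnegative real part and satisfy the
Hartman–Wintner condition `lim_{|ξ|→∞} Re qᵢ(ξ)/log(1+|ξ|) = ∞`. For any family
`gₙ : ℝ → [0,1]` and `qⁿ(x,ξ) := q₁(gₙ(x)·ξ) + q₂((1 − gₙ(x))·ξ)`, one has
`lim_{|ξ|→∞} inf_{n} inf_{x} Re qⁿ(x,ξ)/log(1+|ξ|) = ∞`. -/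
theorem glueing_symbols_uniform_hartman_wintner (q₁ q₂ : ℝ → ℂ)
    (hre₁ : ∀ ξ, 0 ≤ (q₁ ξ).re) (hre₂ : ∀ ξ, 0 ≤ (q₂ ξ).re)
    (hHW₁ : Tendsto (fun ξ : ℝ => (q₁ ξ).re / Real.log (1 + |ξ|)) (cocompact ℝ) atTop)
    (hHW₂ : Tendsto (fun ξ : ℝ => (q₂ ξ).re / Real.log (1 + |ξ|)) (cocompact ℝ) atTop)
    (g : ℕ → ℝ → ℝ) (hg : ∀ n x, g n x ∈ Set.Icc (0 : ℝ) 1) :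
    Tendsto (fun ξ : ℝ =>
        (⨅ n : ℕ, ⨅ x : ℝ, (q₁ (g n x * ξ) + q₂ ((1 - g n x) * ξ)).re) /
          Real.log (1 + |ξ|))
      (cocompact ℝ) atTop := by
  refine tendsto_atTop.2 fun M => ?_
  filter_upwards [eventually_forall_mul_log_le_of_tendsto_div_log hHW₁ M,
    eventually_forall_mul_log_le_of_tendsto_div_log hHW₂ M,
    tendsto_norm_cocompact_atTop.eventually_gt_atTop 0] with ξ h₁ h₂ hξ
  rw [norm_eq_abs] at hξ
  rw [le_div_iff₀' (log_pos (by linarith))]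
  refine le_ciInf fun n => le_ciInf fun x => ?_
  rw [Complex.add_re]
  rcases abs_le_two_mul_abs_mul_or (hg n x) ξ with h | h
  · linarith [h₁ _ h, hre₂ ((1 - g n x) * ξ)]
  · linarith [h₂ _ h, hre₁ (g n x * ξ)]
end

section
/- Let (X,d) be a metric space, let (xᵢ)_{i≥1} be points of X and (rᵢ)_{i≥1} positive radii with rᵢ → 0, and suppose the open balls B(xᵢ, rᵢ) are pairwise disjoint. Set A = ⋃_{i≥1} B(xᵢ, rᵢ). Then the closure of A equals (⋃_{i≥1} closure(B(xᵢ, rᵢ))) ∪ H, where H is the closure of the set {xᵢ : i ≥ 1} of centers. -/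
open Filter Metric

/-- In a metric space, if `(B(xᵢ, rᵢ))_{i}` are pairwise disjoint open
balls with positive radii `rᵢ → 0`, then the closure of `A = ⋃ᵢ B(xᵢ, rᵢ)` equals
`(⋃ᵢ closure(B(xᵢ, rᵢ))) ∪ H`, where `H` is the closure of the set of centers. -/
theorem closure_disjoint_union_balls {X : Type*} [MetricSpace X]
    (x : ℕ → X) (r : ℕ → ℝ) (hr : ∀ i, 0 < r i)
    (hr0 : Tendsto r atTop (nhds 0))
    (hdisj : Pairwise (fun i j => Disjoint (ball (x i) (r i)) (ball (x j) (r j)))) :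
    closure (⋃ i, ball (x i) (r i)) =
      (⋃ i, closure (ball (x i) (r i))) ∪ closure (Set.range x) := by
  apply Set.Subset.antisymm
  · intro y hy
    by_contra hy'
    simp only [Set.mem_union, Set.mem_iUnion, not_or, not_exists] at hy'
    obtain ⟨h1, h2⟩ := hy'
    rw [Metric.mem_closure_iff] at h2
    push_neg at h2
    obtain ⟨δ, hδ, hδ'⟩ := h2
    obtain ⟨N, hN⟩ := (Metric.tendsto_atTop.mp hr0 (δ / 2) (by positivity))
    have hε : ∀ i, ∃ e > 0, ∀ b ∈ ball (x i) (r i), e ≤ dist y b := by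
      intro i
      have h := h1 i
      rw [Metric.mem_closure_iff] at h
      push_neg at h
      exact h
    choose e he he' using hε
    have hFne : (insert (δ / 2) ((Finset.range (N + 1)).image e)).Nonempty :=
      ⟨δ / 2, Finset.mem_insert_self _ _⟩
    set ε := (insert (δ / 2) ((Finset.range (N + 1)).image e)).min' hFne with hε
    have hεpos : 0 < ε := by
      rw [hε, Finset.lt_min'_iff]
      intro a ha
      rcases Finset.mem_insert.mp ha with h | h
      · rw [h]; positivity
      · obtain ⟨i, _, rfl⟩ := Finset.mem_image.mp h
        exact he i
    rw [Metric.mem_closure_iff] at hy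
    obtain ⟨b, hb, hdyb⟩ := hy ε hεpos
    obtain ⟨i, hbi⟩ := Set.mem_iUnion.mp hb
    by_cases hiN : i ≤ N
    · have hεe : ε ≤ e i := by
        apply Finset.min'_le
        exact Finset.mem_insert_of_mem (Finset.mem_image.mpr
          ⟨i, Finset.mem_range.mpr (Nat.lt_succ_of_le hiN), rfl⟩)
      exact absurd (lt_of_lt_of_le hdyb hεe) (not_lt.mpr (he' i b hbi))
    · have hri : r i < δ / 2 := by
        have := hN i (le_of_not_ge hiN)
        rw [Real.dist_eq, sub_zero, abs_of_pos (hr i)] at this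
        exact this
      have hεδ : ε ≤ δ / 2 := Finset.min'_le _ _ (Finset.mem_insert_self _ _)
      have : dist y (x i) < δ := by
        calc dist y (x i) ≤ dist y b + dist b (x i) := dist_triangle _ _ _
          _ < ε + r i := add_lt_add hdyb (mem_ball.mp hbi)
          _ ≤ δ / 2 + δ / 2 := add_le_add hεδ hri.le
          _ = δ := by ring
      exact absurd this (not_lt.mpr (hδ' (x i) ⟨i, rfl⟩))
  · apply Set.union_subset
    · exact Set.iUnion_subset fun i =>
        closure_mono (Set.subset_iUnion (fun i => ball (x i) (r i)) i)
    · apply closure_mono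
      rintro _ ⟨i, rfl⟩
      exact Set.mem_iUnion.mpr ⟨i, mem_ball_self (hr i)⟩
end

section
/- Let 0 < α̲ ≤ ᾱ < 2, let α, β : ℝ → [α̲, ᾱ] be measurable, and let f : ℝ → ℂ be a Schwartz function. Then C_f := ∫_ℝ (|ξ|^{α̲} + |ξ|^{ᾱ}) · |log|ξ|| · ‖f̂(ξ)‖ dξ is finite, and for every x ∈ ℝ, ‖∫_ℝ e^{ixξ} (|ξ|^{α(x)} − |ξ|^{β(x)}) f̂(ξ) dξ‖ ≤ |α(x) − β(x)| · C_f. -/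
/-!
Writing `t ^ c = exp (c log t)`, the mean value theorem in the exponent bounds
`|t ^ a - t ^ b|` by `|a - b| · (t ^ α̲ + t ^ ᾱ) · |log t|` for `a, b ∈ [α̲, ᾱ]`, which gives the
estimate pointwise under the integral. The weight is integrable against `‖f̂‖` because `f̂` is again
a Schwartz function and `t ^ c |log t| ≤ 1 / c + t ^ (n + 1)` whenever `0 < c ≤ n`.
-/

open MeasureTheory

/-- The one-dimensional Fourier transform with the convention
`f̂(ξ) = (2π)^{−1} ∫ e^{−ixξ} f(x) dx`. -/
noncomputable def fourierHat1 (f : ℝ → ℂ) (ξ : ℝ) : ℂ :=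
  (((2 * Real.pi)⁻¹ : ℝ) : ℂ) * ∫ x : ℝ, Complex.exp (-(((x * ξ : ℝ) : ℂ) * Complex.I)) * f x

open Real FourierTransform SchwartzMap

lemma exists_schwartzMap_coe_eq_fourierHat1 (f : 𝓢(ℝ, ℂ)) :
    ∃ g : 𝓢(ℝ, ℂ), ⇑g = fourierHat1 f := by
  have hπ : (2 * π)⁻¹ ≠ 0 := by positivity
  refine ⟨(((2 * π)⁻¹ : ℝ) : ℂ) • compCLMOfContinuousLinearEquiv ℂ
    (ContinuousLinearEquiv.unitsEquivAut ℝ (Units.mk0 _ hπ)) (𝓕 f), ?_⟩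
  ext ξ
  simp only [smul_apply, compCLMOfContinuousLinearEquiv_apply, Function.comp_apply,
    ContinuousLinearEquiv.unitsEquivAut_apply, Units.val_mk0, fourier_coe, Real.fourier_eq',
    fourierHat1, smul_eq_mul]
  congr 2 with x
  simp only [RCLike.inner_apply, conj_trivial]
  congr 2
  push_cast
  field_simp

lemma abs_rpow_sub_rpow_le {a b c d t : ℝ} (ha : 0 < a) (hc : c ∈ Set.Icc a b)
    (hd : d ∈ Set.Icc a b) (ht : 0 ≤ t) :
    |t ^ c - t ^ d| ≤ |c - d| * ((t ^ a + t ^ b) * |log t|) := by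
  rcases ht.eq_or_lt with rfl | ht
  · simp [zero_rpow (ha.trans_le hc.1).ne', zero_rpow (ha.trans_le hd.1).ne']
  have hbound : ∀ e ∈ Set.Icc a b, ‖t ^ e * log t‖ ≤ (t ^ a + t ^ b) * |log t| := by
    intro e he
    rw [norm_mul, norm_of_nonneg (rpow_nonneg ht.le e), Real.norm_eq_abs]
    gcongr
    rcases le_total t 1 with h1 | h1
    · linarith [rpow_le_rpow_of_exponent_ge ht h1 he.1, rpow_nonneg ht.le b]
    · linarith [rpow_le_rpow_of_exponent_le h1 he.2, rpow_nonneg ht.le a]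
  have := (convex_Icc a b).norm_image_sub_le_of_norm_hasDerivWithin_le
    (fun e _ => (hasStrictDerivAt_const_rpow ht e).hasDerivAt.hasDerivWithinAt) hbound hd hc
  simpa [mul_comm] using this

lemma rpow_mul_abs_log_le {c t : ℝ} {n : ℕ} (hc : 0 < c) (hcn : c ≤ n) (ht : 0 ≤ t) :
    t ^ c * |log t| ≤ 1 / c + t ^ (n + 1) := by
  rcases ht.eq_or_lt with rfl | ht
  · rw [log_zero, abs_zero, mul_zero, zero_pow n.succ_ne_zero, add_zero]
    positivity
  rcases le_total t 1 with h1 | h1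
  · have := abs_log_mul_self_rpow_lt t c ht h1 hc
    rw [abs_mul, abs_of_pos (rpow_pos_of_pos ht c)] at this
    linarith [pow_nonneg ht.le (n + 1)]
  · calc t ^ c * |log t| ≤ t ^ (n : ℝ) * t := by
          rw [abs_of_nonneg (log_nonneg h1)]
          exact mul_le_mul (rpow_le_rpow_of_exponent_le h1 hcn)
            (by linarith [log_le_sub_one_of_pos ht]) (log_nonneg h1) (by positivity)
      _ ≤ 1 / c + t ^ (n + 1) := by
          rw [rpow_natCast, ← pow_succ]
          linarith [one_div_pos.2 hc]

lemma integrable_rpow_mul_abs_log_mul_norm (g : 𝓢(ℝ, ℂ)) {c : ℝ} (hc : 0 < c) :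
    Integrable (fun ξ : ℝ => |ξ| ^ c * |log (|ξ|)| * ‖g ξ‖) := by
  have hdom : Integrable (fun ξ : ℝ => 1 / c * ‖g ξ‖ + ‖ξ‖ ^ (⌈c⌉₊ + 1) * ‖g ξ‖) :=
    (g.integrable.norm.const_mul _).add (g.integrable_pow_mul volume _)
  refine hdom.mono' (by fun_prop) (.of_forall fun ξ => ?_)
  rw [norm_of_nonneg (by positivity), ← add_mul, Real.norm_eq_abs]
  exact mul_le_mul_of_nonneg_right (rpow_mul_abs_log_le hc (Nat.le_ceil c) (abs_nonneg ξ))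
    (norm_nonneg _)

theorem stable_like_symbol_difference_bound_general (αl αu : ℝ) (h0 : 0 < αl) (hle : αl ≤ αu)
    (α β : ℝ → ℝ)
    (hα_mem : ∀ x, α x ∈ Set.Icc αl αu) (hβ_mem : ∀ x, β x ∈ Set.Icc αl αu)
    (f : SchwartzMap ℝ ℂ) :
    Integrable (fun ξ : ℝ =>
      (|ξ| ^ αl + |ξ| ^ αu) * |Real.log (|ξ|)| * ‖fourierHat1 (⇑f) ξ‖) ∧
    ∀ x : ℝ,
      ‖∫ ξ : ℝ, Complex.exp (((x * ξ : ℝ) : ℂ) * Complex.I) *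
          (((|ξ| ^ α x - |ξ| ^ β x : ℝ)) : ℂ) * fourierHat1 (⇑f) ξ‖ ≤
        |α x - β x| *
          ∫ ξ : ℝ, (|ξ| ^ αl + |ξ| ^ αu) * |Real.log (|ξ|)| * ‖fourierHat1 (⇑f) ξ‖ := by
  obtain ⟨g, hg⟩ := exists_schwartzMap_coe_eq_fourierHat1 f
  rw [← hg]
  have hint : Integrable (fun ξ : ℝ => (|ξ| ^ αl + |ξ| ^ αu) * |log (|ξ|)| * ‖g ξ‖) := by
    simp_rw [add_mul]
    exact (integrable_rpow_mul_abs_log_mul_norm g h0).add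
      (integrable_rpow_mul_abs_log_mul_norm g (h0.trans_le hle))
  refine ⟨hint, fun x => ?_⟩
  rw [← integral_const_mul]
  refine norm_integral_le_of_norm_le (hint.const_mul _) (.of_forall fun ξ => ?_)
  rw [norm_mul, norm_mul, Complex.norm_exp_ofReal_mul_I, one_mul, Complex.norm_real,
    Real.norm_eq_abs, ← mul_assoc]
  exact mul_le_mul_of_nonneg_right
    (abs_rpow_sub_rpow_le h0 (hα_mem x) (hβ_mem x) (abs_nonneg ξ)) (norm_nonneg _)

/-- For `0 < α̲ ≤ ᾱ < 2`, measurable `α, β : ℝ → [α̲, ᾱ]` and a Schwartz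
function `f : ℝ → ℂ`, the constant
`C_f = ∫ (|ξ|^{α̲} + |ξ|^{ᾱ})·|log|ξ||·‖f̂(ξ)‖ dξ` is finite, and for every `x`,
`‖∫ e^{ixξ} (|ξ|^{α(x)} − |ξ|^{β(x)}) f̂(ξ) dξ‖ ≤ |α(x) − β(x)|·C_f`. -/
theorem stable_like_symbol_difference_bound (αl αu : ℝ) (h0 : 0 < αl) (hle : αl ≤ αu)
    (h2 : αu < 2) (α β : ℝ → ℝ) (hα : Measurable α) (hβ : Measurable β)
    (hα_mem : ∀ x, α x ∈ Set.Icc αl αu) (hβ_mem : ∀ x, β x ∈ Set.Icc αl αu)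
    (f : SchwartzMap ℝ ℂ) :
    Integrable (fun ξ : ℝ =>
      (|ξ| ^ αl + |ξ| ^ αu) * |Real.log (|ξ|)| * ‖fourierHat1 (⇑f) ξ‖) ∧
    ∀ x : ℝ,
      ‖∫ ξ : ℝ, Complex.exp (((x * ξ : ℝ) : ℂ) * Complex.I) *
          (((|ξ| ^ α x - |ξ| ^ β x : ℝ)) : ℂ) * fourierHat1 (⇑f) ξ‖ ≤
        |α x - β x| *
          ∫ ξ : ℝ, (|ξ| ^ αl + |ξ| ^ αu) * |Real.log (|ξ|)| * ‖fourierHat1 (⇑f) ξ‖ :=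
  stable_like_symbol_difference_bound_general αl αu h0 hle α β hα_mem hβ_mem f
end

section
/- Let α : ℝ → ℝ be a measurable function with 0 < inf_{x∈ℝ} α(x) ≤ sup_{x∈ℝ} α(x) < 2, and suppose the closure D̄ of the set D of discontinuity points of α is countable. Then there exist a sequence (U_m)_{m≥1} of open subsets of ℝ and a sequence (αⁿ)_{n≥1} of bounded continuously differentiable functions ℝ → ℝ with bounded derivative such that: (S1) closure(U_{m+1}) ⊆ U_m for all m and λ(U_m) → 0; (S2) 0 < inf_{n≥1} inf_{x∈ℝ} αⁿ(x) ≤ sup_{n≥1} sup_{x∈ℝ} αⁿ(x) < 2; (S3) for every m ≥ 1, sup_{x ∈ [−m,m] ∩ (U_m)ᶜ} |αⁿ(x) − α(x)| → 0 as n → ∞. -/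
/-!
The closure `S` of the discontinuity set is a countable, hence null, closed set, so it has
a nested sequence of open neighbourhoods `U m` of measure tending to zero. Off `U n`, and
in particular on the compact set `[-n, n] \ U n`, the function `α` is continuous; a Tietze
extension of it with values in `[inf α, sup α]` is approximated by a polynomial on an
interval, and a smooth bump glues that polynomial to a constant outside a compact set.
Since the sets `[-n, n] \ U n` increase with `n`, the approximations of accuracy `1 / (n + 1)`
converge uniformly on each of them.
-/

open Filter MeasureTheory Topology Set
open scoped ENNReal ContDiff

section NestedNeighborhoods

variable {X : Type*} [TopologicalSpace X] [NormalSpace X] [MeasurableSpace X]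
  {μ : Measure X} [μ.OuterRegular] {S : Set X}

lemma IsClosed.exists_isOpen_superset_closure_subset_measure_lt (hS : IsClosed S)
    (hS0 : μ S = 0) {V : Set X} (hV : IsOpen V) (hSV : S ⊆ V) {ε : ℝ≥0∞} (hε : 0 < ε) :
    ∃ W, IsOpen W ∧ S ⊆ W ∧ closure W ⊆ V ∧ μ W < ε := by
  obtain ⟨V', hSV', hV', hμV'⟩ := Set.exists_isOpen_lt_of_lt S ε (hS0 ▸ hε)
  obtain ⟨W, hW, hSW, hWV⟩ :=
    normal_exists_closure_subset hS (hV.inter hV') (subset_inter hSV hSV')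
  exact ⟨W, hW, hSW, hWV.trans inter_subset_left,
    (measure_mono (subset_closure.trans (hWV.trans inter_subset_right))).trans_lt hμV'⟩

lemma IsClosed.exists_nested_isOpen_superset_measure_tendsto_zero (hS : IsClosed S)
    (hS0 : μ S = 0) :
    ∃ U : ℕ → Set X, (∀ m, IsOpen (U m)) ∧ (∀ m, S ⊆ U m) ∧
      (∀ m, closure (U (m + 1)) ⊆ U m) ∧ Tendsto (fun m => μ (U m)) atTop (𝓝 0) := by
  have step (V : {V : Set X // IsOpen V ∧ S ⊆ V}) (m : ℕ) :
      ∃ W : {W : Set X // IsOpen W ∧ S ⊆ W},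
        closure W.1 ⊆ V.1 ∧ μ W.1 < ((m + 1 : ℕ) : ℝ≥0∞)⁻¹ := by
    obtain ⟨W, hW, hSW, hWV, hμW⟩ := hS.exists_isOpen_superset_closure_subset_measure_lt hS0
      V.2.1 V.2.2 (ε := ((m + 1 : ℕ) : ℝ≥0∞)⁻¹) (by simp)
    exact ⟨⟨W, hW, hSW⟩, hWV, hμW⟩
  choose next hnext using step
  let U : ℕ → {V : Set X // IsOpen V ∧ S ⊆ V} :=
    fun m => Nat.rec ⟨univ, isOpen_univ, subset_univ S⟩ (fun m V => next V m) m
  refine ⟨fun m => (U m).1, fun m => (U m).2.1, fun m => (U m).2.2,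
    fun m => (hnext (U m) m).1, ?_⟩
  refine tendsto_of_tendsto_of_tendsto_of_le_of_le tendsto_const_nhds
    ENNReal.tendsto_inv_nat_nhds_zero (fun _ => zero_le) fun m => ?_
  cases m with
  | zero => simp
  | succ m => exact (hnext (U m) m).2.le

end NestedNeighborhoods

lemma exists_continuous_eqOn_mem_Icc {X : Type*} [TopologicalSpace X] [NormalSpace X]
    {K : Set X} (hK : IsClosed K) {f : X → ℝ} (hf : ContinuousOn f K) {a b : ℝ}
    (hab : a ≤ b) (hfK : MapsTo f K (Icc a b)) :
    ∃ g : X → ℝ, Continuous g ∧ (∀ x, g x ∈ Icc a b) ∧ EqOn g f K := by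
  obtain ⟨g, hgab, hgf⟩ := ContinuousMap.exists_restrict_eq_forall_mem_of_closed
    ⟨K.domRestrict f, hf.domRestrict⟩ (fun x => hfK x.2) (nonempty_Icc.2 hab) hK
  exact ⟨g, g.continuous, hgab, fun x hx => ContinuousMap.congr_fun hgf ⟨x, hx⟩⟩

lemma Continuous.exists_contDiff_near_of_isCompact {g : ℝ → ℝ} (hg : Continuous g)
    {K : Set ℝ} (hK : IsCompact K) {a b ε : ℝ} (hgab : ∀ x, g x ∈ Icc a b) (hε : 0 < ε) :
    ∃ h : ℝ → ℝ, ContDiff ℝ ∞ h ∧ HasCompactSupport (deriv h) ∧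
      (∀ x, h x ∈ Icc (a - ε) (b + ε)) ∧ ∀ x ∈ K, |h x - g x| < ε := by
  obtain ⟨R, hR0, hKR⟩ := hK.isBounded.subset_closedBall_lt 0 (0 : ℝ)
  let φ : ContDiffBump (0 : ℝ) := ⟨R, R + 1, hR0, by linarith⟩
  obtain ⟨p, hp⟩ := exists_polynomial_near_of_continuousOn (-(R + 1)) (R + 1) g
    hg.continuousOn ε hε
  have hp_mem : ∀ x ∈ Icc (-(R + 1)) (R + 1), p.eval x ∈ Icc (a - ε) (b + ε) := by
    intro x hx
    have := abs_lt.1 (hp x hx)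
    exact ⟨by linarith [(hgab x).1], by linarith [(hgab x).2]⟩
  have ha : a ∈ Icc (a - ε) (b + ε) := ⟨by linarith, by linarith [(hgab 0).1, (hgab 0).2]⟩
  refine ⟨fun x => a + φ x * (p.eval x - a), ?_, ?_, fun x => ?_, fun x hx => ?_⟩
  · have hpoly : ContDiff ℝ ∞ fun x : ℝ => p.eval x := by
      simpa [Polynomial.aeval_def] using p.contDiff_aeval (𝕜 := ℝ) ∞
    exact contDiff_const.add (φ.contDiff.mul (hpoly.sub contDiff_const))
  · have hderiv : deriv (fun x => a + φ x * (p.eval x - a)) =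
        deriv fun x => φ x * (p.eval x - a) :=
      funext fun x => deriv_const_add a
    rw [hderiv]
    exact (φ.hasCompactSupport.mul_right).deriv
  · by_cases hx : x ∈ Icc (-(R + 1)) (R + 1)
    · exact (convex_Icc _ _).add_smul_sub_mem ha (hp_mem x hx) ⟨φ.nonneg, φ.le_one⟩
    · have hφ : φ x = 0 := φ.zero_of_le_dist <| by
        show R + 1 ≤ dist x 0
        rw [Real.dist_eq, sub_zero]
        by_contra hlt
        have := abs_lt.1 (not_le.1 hlt)
        exact hx ⟨this.1.le, this.2.le⟩
      simpa [hφ] using ha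
  · have hφ : φ x = 1 := φ.one_of_mem_closedBall (hKR hx)
    have hxR : x ∈ Icc (-(R + 1)) (R + 1) := by
      have := abs_le.1 (by simpa [Real.dist_eq] using hKR hx : |x| ≤ R)
      exact ⟨by linarith, by linarith⟩
    simpa [hφ] using hp x hxR

lemma ContinuousOn.exists_contDiff_near_of_isCompact {K : Set ℝ} (hK : IsCompact K)
    {f : ℝ → ℝ} (hf : ContinuousOn f K) {a b ε : ℝ} (hab : a ≤ b)
    (hfK : MapsTo f K (Icc a b)) (hε : 0 < ε) :
    ∃ h : ℝ → ℝ, ContDiff ℝ ∞ h ∧ HasCompactSupport (deriv h) ∧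
      (∀ x, h x ∈ Icc (a - ε) (b + ε)) ∧ ∀ x ∈ K, |h x - f x| < ε := by
  obtain ⟨g, hg, hgab, hgf⟩ := exists_continuous_eqOn_mem_Icc hK.isClosed hf hab hfK
  obtain ⟨h, hh, hh', hhab, hhg⟩ := hg.exists_contDiff_near_of_isCompact hK hgab hε
  exact ⟨h, hh, hh', hhab, fun x hx => hgf hx ▸ hhg x hx⟩

lemma tendstoUniformlyOn_of_monotone_of_dist_le {ι X Y : Type*} [Preorder ι]
    [PseudoMetricSpace Y] {K : ι → Set X} (hK : Monotone K) {F : ι → X → Y} {f : X → Y}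
    {δ : ι → ℝ} (hδ : Tendsto δ atTop (𝓝 0))
    (hF : ∀ n, ∀ x ∈ K n, dist (f x) (F n x) ≤ δ n)
    (m : ι) : TendstoUniformlyOn F f atTop (K m) := by
  rw [Metric.tendstoUniformlyOn_iff]
  intro ε hε
  filter_upwards [eventually_ge_atTop m, hδ.eventually (gt_mem_nhds hε)] with n hmn hδn x hx
  exact (hF n x (hK hmn hx)).trans_lt hδn

theorem stable_index_smooth_approximation_general (α : ℝ → ℝ)
    (hlb : ∃ c > (0 : ℝ), ∀ x, c ≤ α x) (hub : ∃ c < (2 : ℝ), ∀ x, α x ≤ c)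
    (hD : (closure {x : ℝ | ¬ ContinuousAt α x}).Countable) :
    ∃ (U : ℕ → Set ℝ) (A : ℕ → ℝ → ℝ),
      (∀ m, IsOpen (U m)) ∧
      (∀ m, closure (U (m + 1)) ⊆ U m) ∧
      Tendsto (fun m => volume (U m)) atTop (nhds 0) ∧
      (∀ n, ContDiff ℝ 1 (A n)) ∧
      (∀ n, ∃ M : ℝ, (∀ x, |A n x| ≤ M) ∧ ∀ x, |deriv (A n) x| ≤ M) ∧
      (∃ c > (0 : ℝ), ∀ n x, c ≤ A n x) ∧
      (∃ c < (2 : ℝ), ∀ n x, A n x ≤ c) ∧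
      (∀ m : ℕ, TendstoUniformlyOn (fun n => A n) α atTop
        (Set.Icc (-(m : ℝ)) (m : ℝ) ∩ (U m)ᶜ)) := by
  obtain ⟨a, ha0, haα⟩ := hlb
  obtain ⟨b, hb2, hαb⟩ := hub
  obtain ⟨U, hUo, hSU, hUU, hU0⟩ :=
    isClosed_closure.exists_nested_isOpen_superset_measure_tendsto_zero (hD.measure_zero volume)
  have hU_anti : Antitone U := antitone_nat_of_succ_le fun m => subset_closure.trans (hUU m)
  set K : ℕ → Set ℝ := fun n => Icc (-(n : ℝ)) n ∩ (U n)ᶜ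
  have hK_mono : Monotone K := fun m n hmn => inter_subset_inter
    (Icc_subset_Icc (by simpa using hmn) (by simpa using hmn)) (compl_subset_compl.2 (hU_anti hmn))
  have hK (n : ℕ) : IsCompact (K n) := isCompact_Icc.inter_right (hUo n).isClosed_compl
  have hαK (n : ℕ) : ContinuousOn α (K n) := fun x hx =>
    (not_not.1 fun hx' => hx.2 (hSU n (subset_closure hx'))).continuousWithinAt
  set ε : ℕ → ℝ := fun n => min (min a (2 - b) / 2) (1 / (n + 1))
  have hε (n : ℕ) : 0 < ε n := lt_min (by simp [ha0, hb2]) (by positivity)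
  have hεab (n : ℕ) : ε n ≤ a / 2 ∧ ε n ≤ (2 - b) / 2 :=
    ⟨(min_le_left _ _).trans (by linarith [min_le_left a (2 - b)]),
      (min_le_left _ _).trans (by linarith [min_le_right a (2 - b)])⟩
  choose A hA hA' hAab hAα using fun n => (hαK n).exists_contDiff_near_of_isCompact (hK n)
    ((haα 0).trans (hαb 0)) (fun x _ => ⟨haα x, hαb x⟩) (hε n)
  have hA_lb (n : ℕ) (x : ℝ) : a / 2 ≤ A n x := by linarith [(hAab n x).1, (hεab n).1]
  have hA_ub (n : ℕ) (x : ℝ) : A n x ≤ (2 + b) / 2 := by linarith [(hAab n x).2, (hεab n).2]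
  refine ⟨U, A, hUo, hUU, hU0, fun n => (hA n).of_le (by simp), fun n => ?_,
    ⟨a / 2, by positivity, hA_lb⟩, ⟨(2 + b) / 2, by linarith, hA_ub⟩,
    tendstoUniformlyOn_of_monotone_of_dist_le hK_mono tendsto_one_div_add_atTop_nhds_zero_nat
      fun n x hx => ?_⟩
  · obtain ⟨C, hC⟩ :=
      ((hA n).continuous_deriv (by simp)).bounded_above_of_compact_support (hA' n)
    refine ⟨max 2 C, fun x => ?_, fun x => (hC x).trans (le_max_right _ _)⟩
    exact (abs_le.2 ⟨by linarith [hA_lb n x], by linarith [hA_ub n x]⟩).trans (le_max_left _ _)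
  · rw [dist_comm, Real.dist_eq]
    exact (hAα n x hx).le.trans (min_le_right _ _)

/-- Let `α : ℝ → ℝ` be measurable with `0 < inf α ≤ sup α < 2` and
suppose the closure of its set of discontinuity points is countable. Then there exist
open sets `(U_m)` and bounded `C¹` functions `(αⁿ)` with bounded derivative such that
(S1) `closure (U_{m+1}) ⊆ U_m` and `λ(U_m) → 0`;
(S2) `0 < inf_n inf_x αⁿ(x) ≤ sup_n sup_x αⁿ(x) < 2`;
(S3) for every `m`, `αⁿ → α` uniformly on `[−m,m] ∩ (U_m)ᶜ` as `n → ∞`. -/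
theorem stable_index_smooth_approximation (α : ℝ → ℝ) (hmeas : Measurable α)
    (hlb : ∃ c > (0 : ℝ), ∀ x, c ≤ α x) (hub : ∃ c < (2 : ℝ), ∀ x, α x ≤ c)
    (hD : (closure {x : ℝ | ¬ ContinuousAt α x}).Countable) :
    ∃ (U : ℕ → Set ℝ) (A : ℕ → ℝ → ℝ),
      (∀ m, IsOpen (U m)) ∧
      (∀ m, closure (U (m + 1)) ⊆ U m) ∧
      Tendsto (fun m => volume (U m)) atTop (nhds 0) ∧
      (∀ n, ContDiff ℝ 1 (A n)) ∧
      (∀ n, ∃ M : ℝ, (∀ x, |A n x| ≤ M) ∧ ∀ x, |deriv (A n) x| ≤ M) ∧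
      (∃ c > (0 : ℝ), ∀ n x, c ≤ A n x) ∧
      (∃ c < (2 : ℝ), ∀ n x, A n x ≤ c) ∧
      (∀ m : ℕ, TendstoUniformlyOn (fun n => A n) α atTop
        (Set.Icc (-(m : ℝ)) (m : ℝ) ∩ (U m)ᶜ)) :=
  stable_index_smooth_approximation_general α hlb hub hD
end
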